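/- For p₀ ∈ (0,1) and γ ∈ (0,1), set u₀ = (1-γ)Φ⁻¹(p₀) and p* = Φ(γΦ⁻¹(p₀)/(1+γ)). Then the function f(p) = ln(γ) + (1/2)[(Φ⁻¹(p))² − (γΦ⁻¹(p) + u₀)²] is strictly decreasing on (0, p*) and strictly increasing on (p*, 1). -/

import Mathlib

/-!
Substituting `x = Φ⁻¹(p)`, which is an increasing bijection `(0,1) → ℝ`, turns `f` into
`log γ + q(x)/2` with `q(x) = x² - (γx + u₀)²`. For `γ² < 1` this is an upward parabola whose
vertex `γu₀/(1-γ²) = γΦ⁻¹(p₀)/(1+γ)` is exactly `Φ⁻¹(p*)`.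
-/

open Real MeasureTheory ProbabilityTheory Set Filter

/-- Standard normal CDF. -/
noncomputable def Phi (x : ℝ) : ℝ :=
  ∫ t in Set.Iic x, Real.exp (-t ^ 2 / 2) / Real.sqrt (2 * Real.pi)

/-- Standard normal quantile function (inverse of `Phi`). -/
noncomputable def PhiInv : ℝ → ℝ := Function.invFun Phi

/-- Standard normal density. -/
noncomputable def ndens (x : ℝ) : ℝ :=
  Real.exp (-x ^ 2 / 2) / Real.sqrt (2 * Real.pi)

/-- Normal distortion function. -/
noncomputable def wdist (p₀ γ p : ℝ) : ℝ :=
  Phi (γ * PhiInv p + (1 - γ) * PhiInv p₀)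

open Topology

lemma integrable_ndens : Integrable ndens := by
  have h := (integrable_exp_neg_mul_sq (by norm_num : (0:ℝ) < 1/2)).div_const √(2 * π)
  convert h using 2 with t
  rw [ndens]; ring_nf

lemma ndens_pos (t : ℝ) : 0 < ndens t :=
  div_pos (exp_pos _) (sqrt_pos.2 (by positivity))

lemma integral_ndens : ∫ t, ndens t = 1 := by
  have hπ : 0 < √(2 * π) := sqrt_pos.2 (by positivity)
  simp only [ndens, integral_div]
  simp_rw [neg_div, div_eq_inv_mul _ (2:ℝ), ← neg_mul]
  rw [integral_gaussian, show π / 2⁻¹ = 2 * π by ring, div_self hπ.ne']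

lemma Phi_sub_Phi (a b : ℝ) : Phi b - Phi a = ∫ t in a..b, ndens t :=
  intervalIntegral.integral_Iic_sub_Iic integrable_ndens.integrableOn integrable_ndens.integrableOn

lemma Phi_strictMono : StrictMono Phi := fun a b hab => by
  have hpos : 0 < ∫ t in a..b, ndens t :=
    intervalIntegral.intervalIntegral_pos_of_pos integrable_ndens.intervalIntegrable ndens_pos hab
  linarith [Phi_sub_Phi a b]

lemma continuous_Phi : Continuous Phi := by
  have hPhi : Phi = fun x => Phi 0 + ∫ t in (0:ℝ)..x, ndens t := by
    ext x; linarith [Phi_sub_Phi 0 x]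
  rw [hPhi]
  exact continuous_const.add
    (intervalIntegral.continuous_primitive (fun _ _ => integrable_ndens.intervalIntegrable) 0)

lemma tendsto_Phi_atBot : Tendsto Phi atBot (𝓝 0) := by
  have h : Tendsto (fun x => Phi 0 - Phi x) atBot (𝓝 (Phi 0)) :=
    (intervalIntegral_tendsto_integral_Iic 0 integrable_ndens.integrableOn tendsto_id).congr
      fun x => (Phi_sub_Phi x 0).symm
  simpa using (tendsto_const_nhds (x := Phi 0)).sub h

lemma tendsto_Phi_atTop : Tendsto Phi atTop (𝓝 1) := by
  have h : Tendsto (fun x => Phi x - Phi (-x)) atTop (𝓝 1) := by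
    rw [← integral_ndens]
    exact (intervalIntegral_tendsto_integral integrable_ndens tendsto_neg_atTop_atBot
      tendsto_id).congr fun x => (Phi_sub_Phi (-x) x).symm
  simpa using h.add (tendsto_Phi_atBot.comp tendsto_neg_atTop_atBot)

lemma Phi_mem_Ioo (x : ℝ) : Phi x ∈ Ioo 0 1 :=
  ⟨(Phi_strictMono.monotone.le_of_tendsto tendsto_Phi_atBot (x - 1)).trans_lt
      (Phi_strictMono (sub_one_lt x)),
    (Phi_strictMono (lt_add_one x)).trans_le
      (Phi_strictMono.monotone.ge_of_tendsto tendsto_Phi_atTop (x + 1))⟩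

lemma exists_Phi_eq {p : ℝ} (hp : p ∈ Ioo 0 1) : ∃ x, Phi x = p := by
  obtain ⟨a, ha⟩ := (tendsto_Phi_atBot.eventually (eventually_lt_nhds hp.1)).exists
  obtain ⟨b, hb⟩ := (tendsto_Phi_atTop.eventually (eventually_gt_nhds hp.2)).exists
  have hab : a ≤ b := (Phi_strictMono.lt_iff_lt.mp (ha.trans hb)).le
  obtain ⟨x, -, hx⟩ := intermediate_value_Icc hab continuous_Phi.continuousOn ⟨ha.le, hb.le⟩
  exact ⟨x, hx⟩

lemma Phi_PhiInv {p : ℝ} (hp : p ∈ Ioo 0 1) : Phi (PhiInv p) = p :=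
  Function.invFun_eq (exists_Phi_eq hp)

lemma PhiInv_lt_iff {p : ℝ} (hp : p ∈ Ioo 0 1) {x : ℝ} : PhiInv p < x ↔ p < Phi x := by
  conv_rhs => rw [← Phi_PhiInv hp]
  exact Phi_strictMono.lt_iff_lt.symm

lemma lt_PhiInv_iff {p : ℝ} (hp : p ∈ Ioo 0 1) {x : ℝ} : x < PhiInv p ↔ Phi x < p := by
  conv_rhs => rw [← Phi_PhiInv hp]
  exact Phi_strictMono.lt_iff_lt.symm

lemma strictMonoOn_PhiInv : StrictMonoOn PhiInv (Ioo 0 1) := fun p hp q hq hpq =>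
  (PhiInv_lt_iff hp).2 (by rwa [Phi_PhiInv hq])

section Parabola

variable {γ u : ℝ}

lemma sq_sub_sq_affine_sub_eq (hγ : γ ^ 2 < 1) (x y : ℝ) :
    (y ^ 2 - (γ * y + u) ^ 2) - (x ^ 2 - (γ * x + u) ^ 2)
      = (1 - γ ^ 2) * (y - x) * (x + y - 2 * (γ * u / (1 - γ ^ 2))) := by
  have : 1 - γ ^ 2 ≠ 0 := by linarith
  field_simp
  ring

lemma strictAntiOn_sq_sub_sq_affine (hγ : γ ^ 2 < 1) :
    StrictAntiOn (fun x => x ^ 2 - (γ * x + u) ^ 2) (Iic (γ * u / (1 - γ ^ 2))) :=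
  fun x hx y hy hxy => by
    have hpos : 0 < (1 - γ ^ 2) * (y - x) * -(x + y - 2 * (γ * u / (1 - γ ^ 2))) := by
      have := mem_Iic.1 hx; have := mem_Iic.1 hy
      apply mul_pos (mul_pos _ _) <;> linarith
    linarith [sq_sub_sq_affine_sub_eq (u := u) hγ x y]

lemma strictMonoOn_sq_sub_sq_affine (hγ : γ ^ 2 < 1) :
    StrictMonoOn (fun x => x ^ 2 - (γ * x + u) ^ 2) (Ici (γ * u / (1 - γ ^ 2))) :=
  fun x hx y hy hxy => by
    have hpos : 0 < (1 - γ ^ 2) * (y - x) * (x + y - 2 * (γ * u / (1 - γ ^ 2))) := by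
      have := mem_Ici.1 hx; have := mem_Ici.1 hy
      apply mul_pos (mul_pos _ _) <;> linarith
    linarith [sq_sub_sq_affine_sub_eq (u := u) hγ x y]

end Parabola

theorem stmt3_general (p₀ γ : ℝ) (hγ : γ ∈ Set.Ioo (0:ℝ) 1) :
    StrictAntiOn
      (fun p => Real.log γ + (1/2) * ((PhiInv p)^2 - (γ * PhiInv p + (1 - γ) * PhiInv p₀)^2))
      (Set.Ioo 0 (Phi (γ * PhiInv p₀ / (1 + γ)))) ∧
    StrictMonoOn
      (fun p => Real.log γ + (1/2) * ((PhiInv p)^2 - (γ * PhiInv p + (1 - γ) * PhiInv p₀)^2))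
      (Set.Ioo (Phi (γ * PhiInv p₀ / (1 + γ))) 1) := by
  obtain ⟨hγ0, hγ1⟩ := hγ
  have hγsq : γ ^ 2 < 1 := by nlinarith
  have hvertex : γ * PhiInv p₀ / (1 + γ) = γ * ((1 - γ) * PhiInv p₀) / (1 - γ ^ 2) := by
    have : 1 - γ ^ 2 ≠ 0 := by linarith
    field_simp
    ring
  rw [hvertex]
  set xs := γ * ((1 - γ) * PhiInv p₀) / (1 - γ ^ 2)
  obtain ⟨hxs0, hxs1⟩ := Phi_mem_Ioo xs
  have hlo : Ioo 0 (Phi xs) ⊆ Ioo 0 1 := Ioo_subset_Ioo_right hxs1.le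
  have hhi : Ioo (Phi xs) 1 ⊆ Ioo 0 1 := Ioo_subset_Ioo_left hxs0.le
  have hanti := (strictAntiOn_sq_sub_sq_affine hγsq).comp_strictMonoOn
    (strictMonoOn_PhiInv.mono hlo) fun p hp => ((PhiInv_lt_iff (hlo hp)).2 hp.2).le
  have hmono := (strictMonoOn_sq_sub_sq_affine hγsq).comp
    (strictMonoOn_PhiInv.mono hhi) fun p hp => ((lt_PhiInv_iff (hhi hp)).2 hp.1).le
  have hscale : StrictMono fun y : ℝ => log γ + 1 / 2 * y := fun a b hab => by
    dsimp only; linarith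
  exact ⟨hscale.comp_strictAntiOn hanti, hscale.comp_strictMonoOn hmono⟩

theorem stmt3 (p₀ γ : ℝ) (hp₀ : p₀ ∈ Set.Ioo (0:ℝ) 1) (hγ : γ ∈ Set.Ioo (0:ℝ) 1) :
    StrictAntiOn
      (fun p => Real.log γ + (1/2) * ((PhiInv p)^2 - (γ * PhiInv p + (1 - γ) * PhiInv p₀)^2))
      (Set.Ioo 0 (Phi (γ * PhiInv p₀ / (1 + γ)))) ∧
    StrictMonoOn
      (fun p => Real.log γ + (1/2) * ((PhiInv p)^2 - (γ * PhiInv p + (1 - γ) * PhiInv p₀)^2))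
      (Set.Ioo (Phi (γ * PhiInv p₀ / (1 + γ))) 1) :=
  stmt3_general p₀ γ hγ
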